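/- Suppose Δ_h and Δ_l are propositional theories and m is a separable refinement mapping such that Δ_l ⊨ m(φ) for every conjunct φ of Δ_h. Then Δ_h is a sound abstraction of Δ_l relative to m: every model of Δ_l has an m-isomorphic model of Δ_h. -/

import Mathlib

/-- Propositional formulas over atoms of type `α`. -/
inductive Form (α : Type) where
  | tru : Form α
  | atom : α → Form α
  | neg : Form α → Form α
  | conj : Form α → Form α → Form α
  | disj : Form α → Form α → Form α

/-- Truth value of a formula in a model `M : α → Bool`. -/
def Form.eval {α : Type} (M : α → Bool) : Form α → Bool
  | .tru => true
  | .atom a => M a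
  | .neg φ => !(φ.eval M)
  | .conj φ ψ => φ.eval M && ψ.eval M
  | .disj φ ψ => φ.eval M || ψ.eval M

/-- Homomorphic extension of a refinement mapping `m` on atoms to all formulas. -/
def Form.map {α β : Type} (m : α → Form β) : Form α → Form β
  | .tru => .tru
  | .atom a => m a
  | .neg φ => .neg (φ.map m)
  | .conj φ ψ => .conj (φ.map m) (ψ.map m)
  | .disj φ ψ => .disj (φ.map m) (ψ.map m)

/-- The set of atoms mentioned in a formula. -/
def Form.atoms {α : Type} [DecidableEq α] : Form α → Finset α
  | .tru => ∅
  | .atom a => {a}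
  | .neg φ => φ.atoms
  | .conj φ ψ => φ.atoms ∪ ψ.atoms
  | .disj φ ψ => φ.atoms ∪ ψ.atoms

/-- Weighted model count of `Δ` under literal weights `w` (`w a true` is the
weight of the positive literal on atom `a`, `w a false` of the negative one). -/
noncomputable def WMC {α : Type} [Fintype α] [DecidableEq α]
    (Δ : Form α) (w : α → Bool → ℝ) : ℝ :=
  ∑ M ∈ Finset.univ.filter (fun M : α → Bool => Δ.eval M = true), ∏ a, w a (M a)

/-- `Pr(φ, Δ, w) = WMC(φ ∧ Δ, w) / WMC(Δ, w)`. -/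
noncomputable def Pr {α : Type} [Fintype α] [DecidableEq α]
    (φ Δ : Form α) (w : α → Bool → ℝ) : ℝ :=
  WMC (Form.conj φ Δ) w / WMC Δ w

/-- `Mh` is `m`-isomorphic to `Ml`. -/
def Iso {α β : Type} (m : α → Form β) (Mh : α → Bool) (Ml : β → Bool) : Prop :=
  ∀ a : α, Mh a = (m a).eval Ml

/-- `m` is separable: high-level formulas sharing no atoms are mapped to
low-level formulas sharing no atoms. -/
def Separable {α β : Type} [DecidableEq α] [DecidableEq β] (m : α → Form β) : Prop :=
  ∀ φ ψ : Form α, Disjoint φ.atoms ψ.atoms →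
    Disjoint (φ.map m).atoms (ψ.map m).atoms

/-! The high-level model is read off the low-level one through `m`: put `Mh a := Ml ⊨ m a`.
Since `m` commutes with the connectives, `Mh ⊨ φ` iff `Ml ⊨ m φ`, so `Mh` satisfies every
conjunct of `Δh` as soon as `Ml` satisfies `Δl`. -/

theorem Form.eval_map {α β : Type} (m : α → Form β) (M : β → Bool) (φ : Form α) :
    (φ.map m).eval M = φ.eval (fun a => (m a).eval M) := by
  induction φ with
  | tru => rfl
  | atom a => rfl
  | neg φ ih => simp only [Form.map, Form.eval, ih]
  | conj φ ψ ihφ ihψ => simp only [Form.map, Form.eval, ihφ, ihψ]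
  | disj φ ψ ihφ ihψ => simp only [Form.map, Form.eval, ihφ, ihψ]

theorem Form.eval_foldr_conj_tru {α : Type} (M : α → Bool) (Γ : List (Form α)) :
    (Γ.foldr Form.conj Form.tru).eval M = true ↔ ∀ φ ∈ Γ, φ.eval M = true := by
  induction Γ with
  | nil => simp [Form.eval]
  | cons φ Γ ih => simp [Form.eval, ih]

theorem stmt16_general {α β : Type}
    (Γ : List (Form α)) (Δl : Form β) (m : α → Form β)
    (hent : ∀ φ ∈ Γ, ∀ Ml : β → Bool, Δl.eval Ml = true → (φ.map m).eval Ml = true) :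
    ∀ Ml : β → Bool, Δl.eval Ml = true →
      ∃ Mh : α → Bool, (Γ.foldr Form.conj Form.tru).eval Mh = true ∧ Iso m Mh Ml := by
  intro Ml hMl
  refine ⟨fun a => (m a).eval Ml, ?_, fun _ => rfl⟩
  rw [Form.eval_foldr_conj_tru]
  intro φ hφ
  rw [← Form.eval_map]
  exact hent φ hφ Ml hMl

theorem stmt16 {α β : Type} [DecidableEq α] [DecidableEq β]
    (Γ : List (Form α)) (Δl : Form β) (m : α → Form β)
    (hsep : Separable m)
    (hent : ∀ φ ∈ Γ, ∀ Ml : β → Bool, Δl.eval Ml = true → (φ.map m).eval Ml = true) :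
    ∀ Ml : β → Bool, Δl.eval Ml = true →
      ∃ Mh : α → Bool, (Γ.foldr Form.conj Form.tru).eval Mh = true ∧ Iso m Mh Ml :=
  stmt16_general Γ Δl m hent
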